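/- arXiv:2302.10867 — 8 statements merged into one kernel-verified Lean document; each statement's English description precedes it below -/
import Mathlib

section
/- Let k be a commutative ring with 1/2, A a commutative k-algebra with involution θ, and let 𝐀 ⊆ A[√t^{±1}] be the k[t]-subalgebra generated by A^θ and (1/√t)·A^{-θ} (where t = (√t)²). Then the base change 𝐀 ⊗_{k[t]} k[t^{±1}] is canonically isomorphic as a k[t^{±1}]-algebra to A_t := A^θ[t^{±1}] ⊕ (1/√t)A^{-θ} ⊗_k k[t^{±1}] ⊆ A[√t^{±1}]. -/
/-!
Inverting `t = (√t)²` in `𝐀` only adds `t⁻¹ = (√t)⁻²`, so `A_t` is generated over `𝐀` by `t⁻¹`.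
Hence every element of `A_t` lands in `𝐀` after multiplication by a power of `t`, and since `𝐀 ⊆ A_t`
is injective with `t` a unit in `A_t`, this is exactly the characterization of `A_t` as the
localization of `𝐀` away from `t`.
-/

open LaurentPolynomial

/-- The contraction algebra `𝐀`: the `k[t]`-subalgebra of `A[√t^{±1}]`
(realized as the `k`-subalgebra containing `t = (√t)²`) generated by
`A^θ` and `(1/√t)·A^{-θ}`. -/
noncomputable def contraction (k A : Type*) [CommRing k] [CommRing A] [Algebra k A]
    (θ : A →ₐ[k] A) : Subalgebra k (LaurentPolynomial A) :=
  Algebra.adjoin k (insert (T 2)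
    ({f | ∃ a, θ a = a ∧ f = C a} ∪ {f | ∃ a, θ a = -a ∧ f = C a * T (-1)}))

/-- `A_t`: the `k[t^{±1}]`-subalgebra of `A[√t^{±1}]` generated by `A^θ` and
`(1/√t)·A^{-θ}`, i.e. `A^θ[t^{±1}] ⊕ (1/√t)A^{-θ} ⊗ k[t^{±1}]`. -/
noncomputable def contractionT (k A : Type*) [CommRing k] [CommRing A] [Algebra k A]
    (θ : A →ₐ[k] A) : Subalgebra k (LaurentPolynomial A) :=
  Algebra.adjoin k (insert (T 2) (insert (T (-2))
    ({f | ∃ a, θ a = a ∧ f = C a} ∪ {f | ∃ a, θ a = -a ∧ f = C a * T (-1)})))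

theorem t_mem_contraction {k A : Type*} [CommRing k] [CommRing A] [Algebra k A]
    (θ : A →ₐ[k] A) : (T 2 : LaurentPolynomial A) ∈ contraction k A θ :=
  Algebra.subset_adjoin (Set.mem_insert _ _)

theorem contraction_le_contractionT {k A : Type*} [CommRing k] [CommRing A] [Algebra k A]
    (θ : A →ₐ[k] A) : contraction k A θ ≤ contractionT k A θ :=
  Algebra.adjoin_mono (Set.insert_subset_insert (Set.subset_insert _ _))

namespace Subalgebra

variable {k R : Type*} [CommRing k] [CommRing R] [Algebra k R]

theorem exists_mul_pow_mem_of_mem_adjoin_insert {S : Subalgebra k R} {t u : R} (ht : t ∈ S)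
    (htu : t * u = 1) {z : R} (hz : z ∈ Algebra.adjoin k (insert u (S : Set R))) :
    ∃ n : ℕ, z * t ^ n ∈ S := by
  induction hz using Algebra.adjoin_induction with
  | mem x hx =>
    rcases hx with rfl | hx
    · exact ⟨1, by rw [pow_one, mul_comm, htu]; exact S.one_mem⟩
    · exact ⟨0, by rwa [pow_zero, mul_one]⟩
  | algebraMap r => exact ⟨0, by rw [pow_zero, mul_one]; exact S.algebraMap_mem r⟩
  | add x y _ _ ihx ihy =>
    obtain ⟨n, hn⟩ := ihx
    obtain ⟨m, hm⟩ := ihy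
    refine ⟨n + m, ?_⟩
    have h : (x + y) * t ^ (n + m) = x * t ^ n * t ^ m + y * t ^ m * t ^ n := by ring
    rw [h]
    exact S.add_mem (S.mul_mem hn (S.pow_mem ht m)) (S.mul_mem hm (S.pow_mem ht n))
  | mul x y _ _ ihx ihy =>
    obtain ⟨n, hn⟩ := ihx
    obtain ⟨m, hm⟩ := ihy
    refine ⟨n + m, ?_⟩
    have h : x * y * t ^ (n + m) = x * t ^ n * (y * t ^ m) := by ring
    rw [h]
    exact S.mul_mem hn hm

theorem isLocalization_away_inclusion {S S' : Subalgebra k R} (h : S ≤ S') {t u : R} (ht : t ∈ S)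
    (hu : u ∈ S') (htu : t * u = 1) (hsat : ∀ z ∈ S', ∃ n : ℕ, z * t ^ n ∈ S) :
    letI : Algebra S S' := (inclusion h).toRingHom.toAlgebra
    IsLocalization.Away (⟨t, ht⟩ : S) S' := by
  let : Algebra S S' := (inclusion h).toRingHom.toAlgebra
  refine (isLocalization_iff _ _).mpr ⟨?_, ?_, ?_⟩
  · rintro ⟨_, n, rfl⟩
    rw [map_pow]
    exact (IsUnit.of_mul_eq_one (b := ⟨u, hu⟩) (Subtype.ext htu)).pow n
  · rintro ⟨z, hz⟩
    obtain ⟨n, hn⟩ := hsat z hz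
    exact ⟨⟨⟨z * t ^ n, hn⟩, ⟨_, n, rfl⟩⟩, Subtype.ext (by simp [RingHom.algebraMap_toAlgebra])⟩
  · intro x y hxy
    exact ⟨1, by rw [inclusion_injective h hxy]⟩

end Subalgebra

theorem contractionT_le_adjoin_insert_contraction {k A : Type*} [CommRing k] [CommRing A]
    [Algebra k A] (θ : A →ₐ[k] A) :
    contractionT k A θ ≤ Algebra.adjoin k (insert (T (-2)) (contraction k A θ : Set _)) := by
  refine Algebra.adjoin_mono ?_
  rw [Set.insert_comm]
  exact Set.insert_subset_insert Algebra.subset_adjoin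

theorem T_neg_two_mem_contractionT {k A : Type*} [CommRing k] [CommRing A] [Algebra k A]
    (θ : A →ₐ[k] A) : (T (-2) : LaurentPolynomial A) ∈ contractionT k A θ :=
  Algebra.subset_adjoin (Set.mem_insert_of_mem _ (Set.mem_insert _ _))

/-- Since `k[t] → k[t^{±1}]` is the localization at `t`, the base change `𝐀 ⊗_{k[t]} k[t^{±1}] ≅ A_t`
says exactly that `A_t`, as an `𝐀`-algebra via `𝐀 ⊆ A_t`, is the localization of `𝐀` away from
`t`. -/
theorem contraction_baseChange_laurent_general
    (k A : Type*) [CommRing k] [CommRing A] [Algebra k A]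
    (θ : A →ₐ[k] A) :
    letI : Algebra ↥(contraction k A θ) ↥(contractionT k A θ) :=
      (Subalgebra.inclusion (contraction_le_contractionT θ)).toRingHom.toAlgebra
    IsLocalization.Away
      (⟨T 2, t_mem_contraction θ⟩ : ↥(contraction k A θ))
      ↥(contractionT k A θ) := by
  have hT : (T 2 : LaurentPolynomial A) * T (-2) = 1 := by rw [← T_add]; norm_num
  exact Subalgebra.isLocalization_away_inclusion (contraction_le_contractionT θ)
    (t_mem_contraction θ) (T_neg_two_mem_contractionT θ) hT fun _ hz ↦
      Subalgebra.exists_mul_pow_mem_of_mem_adjoin_insert (t_mem_contraction θ) hT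
        (contractionT_le_adjoin_insert_contraction θ hz)

theorem contraction_baseChange_laurent
    (k A : Type*) [CommRing k] [CommRing A] [Algebra k A] [Invertible (2 : k)]
    (θ : A →ₐ[k] A) (hθ : θ.comp θ = AlgHom.id k A) :
    letI : Algebra ↥(contraction k A θ) ↥(contractionT k A θ) :=
      (Subalgebra.inclusion (contraction_le_contractionT θ)).toRingHom.toAlgebra
    IsLocalization.Away
      (⟨T 2, t_mem_contraction θ⟩ : ↥(contraction k A θ))
      ↥(contractionT k A θ) :=
  contraction_baseChange_laurent_general k A θ
end

section
/- Let {a_λ}_{λ∈Λ} be a generating set of A as a k-algebra. Write a₊ = (a + θ(a))/2 and a₋ = (a − θ(a))/2. Then the fixed subalgebra A^θ is generated as a k-algebra by the elements a_{λ+} and the products a_{λ−}·a_{μ−} for λ, μ ∈ Λ. -/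
/-!
Every `x : A` splits as `x₊ + x₋` with `θ x₊ = x₊` and `θ x₋ = -x₋`. Let `B` be the subalgebra
generated by the proposed elements and `M` the span of the `a_{λ-}`. Since `M * M ≤ B`, the
submodule `B ⊔ B * M` is closed under multiplication, and it contains every `a_λ = a_{λ+} + a_{λ-}`,
so it is all of `A`. Elements of `B * M` are anti-fixed, so a fixed element `b + c` with `b ∈ B`,
`c ∈ B * M` has `c = -c`, hence `c = 0` as `2` is invertible.
-/

open Algebra Function Subalgebra

theorem eq_zero_of_neg_eq_self (k : Type*) {V : Type*} [Semiring k] [AddCommGroup V]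
    [Module k V] [Invertible (2 : k)] {x : V} (h : -x = x) : x = 0 := by
  have h2 : (2 : k) • x = 0 := by rw [two_smul]; nth_rewrite 1 [← h]; exact neg_add_cancel x
  exact (isUnit_of_invertible (2 : k)).smul_eq_zero.mp h2

section Parts

variable {k V : Type*} [Semiring k] [AddCommGroup V] [Module k V] [Invertible (2 : k)]

def evenPart (θ : V →ₗ[k] V) (x : V) : V := ⅟(2 : k) • (x + θ x)

def oddPart (θ : V →ₗ[k] V) (x : V) : V := ⅟(2 : k) • (x - θ x)

theorem evenPart_add_oddPart (θ : V →ₗ[k] V) (x : V) : evenPart θ x + oddPart θ x = x := by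
  rw [evenPart, oddPart, ← smul_add, add_add_sub_cancel, ← two_smul k, smul_smul,
    invOf_mul_self, one_smul]

theorem map_evenPart {θ : V →ₗ[k] V} (hθ : Involutive θ) (x : V) :
    θ (evenPart θ x) = evenPart θ x := by
  rw [evenPart, map_smul, map_add, hθ x, add_comm]

theorem map_oddPart {θ : V →ₗ[k] V} (hθ : Involutive θ) (x : V) :
    θ (oddPart θ x) = -oddPart θ x := by
  rw [oddPart, map_smul, map_sub, hθ x, ← smul_neg, neg_sub]

end Parts

section Parity

variable {k A : Type*} [CommRing k] [Ring A] [Algebra k A]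

theorem map_eq_neg_of_mem_mul (θ : A →ₐ[k] A) {S M : Submodule k A}
    (hS : ∀ x ∈ S, θ x = x) (hM : ∀ y ∈ M, θ y = -y) {z : A} (hz : z ∈ S * M) : θ z = -z :=
  Submodule.mul_induction_on hz (fun x hx y hy => by rw [map_mul, hS x hx, hM y hy, mul_neg])
    (fun x y hx hy => by rw [map_add, hx, hy, neg_add])

theorem mem_of_mem_sup_mul_of_map_eq_self [Invertible (2 : k)] (θ : A →ₐ[k] A)
    {S M : Submodule k A} (hS : ∀ x ∈ S, θ x = x) (hM : ∀ y ∈ M, θ y = -y) {x : A}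
    (hx : x ∈ S ⊔ S * M) (hθx : θ x = x) : x ∈ S := by
  obtain ⟨b, hb, c, hc, rfl⟩ := Submodule.mem_sup.1 hx
  have hc0 : c = 0 := eq_zero_of_neg_eq_self k <| by
    rwa [map_add, hS b hb, map_eq_neg_of_mem_mul θ hS hM hc, add_right_inj] at hθx
  rwa [hc0, add_zero]

end Parity

section Closure

variable {k A : Type*} [CommRing k] [CommRing A] [Algebra k A]

theorem sup_mul_mul_self_le {B : Subalgebra k A} {M : Submodule k A}
    (hM : M * M ≤ toSubmodule B) :
    (toSubmodule B ⊔ toSubmodule B * M) * (toSubmodule B ⊔ toSubmodule B * M) ≤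
      toSubmodule B ⊔ toSubmodule B * M := by
  set S := toSubmodule B
  have hS : S * S = S := B.isIdempotentElem_toSubmodule
  have hSM : S * M * (S * M) ≤ S := calc
    S * M * (S * M) = S * S * (M * M) := by ring
    _ ≤ S * S * S := mul_le_mul_right hM _
    _ = S := by rw [hS, hS]
  rw [Submodule.sup_mul, Submodule.mul_sup, Submodule.mul_sup, hS, ← mul_assoc, hS,
    mul_comm (S * M), ← mul_assoc, hS]
  exact sup_le le_rfl (sup_le le_sup_right (hSM.trans le_sup_left))

theorem sup_mul_eq_top {B : Subalgebra k A} {M : Submodule k A} (hM : M * M ≤ toSubmodule B)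
    {s : Set A} (hs : adjoin k s = ⊤) (hsub : ∀ x ∈ s, x ∈ toSubmodule B ⊔ toSubmodule B * M) :
    toSubmodule B ⊔ toSubmodule B * M = ⊤ := by
  let N : Subalgebra k A := Submodule.toSubalgebra _ (le_sup_left (a := toSubmodule B) B.one_mem)
    fun _ _ hx hy => sup_mul_mul_self_le hM (Submodule.mul_mem_mul hx hy)
  have hsN : adjoin k s ≤ N := adjoin_le hsub
  exact eq_top_iff.2 fun x _ => hsN (hs ▸ Algebra.mem_top)

end Closure

section Generators

variable {k A Λ : Type*} [CommRing k] [CommRing A] [Algebra k A] [Invertible (2 : k)]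
  (θ : A →ₐ[k] A) (a : Λ → A)

def fixedGenerators : Set A :=
  Set.range (fun l => evenPart θ.toLinearMap (a l)) ∪
    Set.range fun p : Λ × Λ => oddPart θ.toLinearMap (a p.1) * oddPart θ.toLinearMap (a p.2)

def oddPartSpan : Submodule k A := Submodule.span k (Set.range fun l => oddPart θ.toLinearMap (a l))

variable {θ} in
theorem map_oddPart_toLinearMap (hθ : Involutive θ) (x : A) :
    θ (oddPart θ.toLinearMap x) = -oddPart θ.toLinearMap x :=
  map_oddPart (θ := θ.toLinearMap) hθ x

theorem adjoin_fixedGenerators_le_equalizer (hθ : Involutive θ) :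
    adjoin k (fixedGenerators θ a) ≤ θ.equalizer (AlgHom.id k A) := by
  refine adjoin_le ?_
  rintro _ (⟨l, rfl⟩ | ⟨⟨l, l'⟩, rfl⟩)
  · exact map_evenPart (θ := θ.toLinearMap) hθ (a l)
  · exact (map_mul θ _ _).trans <| by
      rw [map_oddPart_toLinearMap hθ, map_oddPart_toLinearMap hθ, neg_mul_neg]; rfl

theorem map_eq_neg_of_mem_oddPartSpan (hθ : Involutive θ) {y : A} (hy : y ∈ oddPartSpan θ a) :
    θ y = -y := by
  induction hy using Submodule.span_induction with
  | mem _ h => obtain ⟨l, rfl⟩ := h; exact map_oddPart_toLinearMap hθ (a l)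
  | zero => rw [map_zero, neg_zero]
  | add _ _ _ _ hy hz => rw [map_add, hy, hz, neg_add]
  | smul c _ _ hy => rw [map_smul, hy, smul_neg]

theorem oddPartSpan_mul_self_le :
    oddPartSpan θ a * oddPartSpan θ a ≤ toSubmodule (adjoin k (fixedGenerators θ a)) := by
  rw [oddPartSpan, Submodule.span_mul_span, Submodule.span_le]
  rintro _ ⟨_, ⟨l, rfl⟩, _, ⟨l', rfl⟩, rfl⟩
  exact subset_adjoin (Or.inr ⟨(l, l'), rfl⟩)

theorem mem_sup_mul_oddPartSpan (l : Λ) :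
    a l ∈ toSubmodule (adjoin k (fixedGenerators θ a)) ⊔
      toSubmodule (adjoin k (fixedGenerators θ a)) * oddPartSpan θ a := by
  rw [← evenPart_add_oddPart θ.toLinearMap (a l)]
  refine Submodule.add_mem_sup (subset_adjoin (Or.inl ⟨l, rfl⟩)) ?_
  have h := Submodule.mul_mem_mul
    (show (1 : A) ∈ toSubmodule (adjoin k (fixedGenerators θ a)) from Subalgebra.one_mem _)
    (Submodule.subset_span ⟨l, rfl⟩ : oddPart θ.toLinearMap (a l) ∈ oddPartSpan θ a)
  rwa [one_mul] at h

end Generators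

theorem fixedSubalgebra_generators
    (k A Λ : Type*) [CommRing k] [CommRing A] [Algebra k A] [Invertible (2 : k)]
    (θ : A →ₐ[k] A) (hθ : θ.comp θ = AlgHom.id k A)
    (a : Λ → A) (hgen : Algebra.adjoin k (Set.range a) = ⊤) :
    Algebra.adjoin k
      ((Set.range fun l => (⅟(2 : k)) • (a l + θ (a l))) ∪
       (Set.range fun p : Λ × Λ =>
          ((⅟(2 : k)) • (a p.1 - θ (a p.1))) * ((⅟(2 : k)) • (a p.2 - θ (a p.2)))))
      = AlgHom.equalizer θ (AlgHom.id k A) := by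
  have hinv : Involutive θ := AlgHom.congr_fun hθ
  change adjoin k (fixedGenerators θ a) = _
  have hfixed := adjoin_fixedGenerators_le_equalizer θ a hinv
  have htop := sup_mul_eq_top (oddPartSpan_mul_self_le θ a) hgen
    (Set.forall_mem_range.2 (mem_sup_mul_oddPartSpan θ a))
  refine le_antisymm hfixed fun x hx => ?_
  refine mem_of_mem_sup_mul_of_map_eq_self θ (S := toSubmodule (adjoin k (fixedGenerators θ a)))
    (fun y hy => hfixed hy) (fun y => map_eq_neg_of_mem_oddPartSpan θ a hinv) ?_ hx
  rw [htop]
  exact Submodule.mem_top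
end

section
/- Let {a_λ}_{λ∈Λ} be a generating set of A as a k-algebra. Then A^{-θ} = {a ∈ A : θ(a) = −a} is generated as an A^θ-module by the elements a_{λ−} = (a_λ − θ(a_λ))/2, λ ∈ Λ. -/
/-!
STATEMENT 7: if `{a_λ}_{λ∈Λ}` generates `A` as a `k`-algebra, then `A^{-θ}`
is generated as an `A^θ`-module by the elements `a_{λ-} = (a_λ - θ a_λ)/2`,
i.e. the `A^θ`-span of these elements is exactly `{x | θ x = -x}`. -/
theorem negPart_module_generators
    (k A Λ : Type*) [CommRing k] [CommRing A] [Algebra k A] [Invertible (2 : k)]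
    (θ : A →ₐ[k] A) (hθ : θ.comp θ = AlgHom.id k A)
    (a : Λ → A) (hgen : Algebra.adjoin k (Set.range a) = ⊤) :
    (Submodule.span ↥(AlgHom.equalizer θ (AlgHom.id k A))
        (Set.range fun l => (⅟(2 : k)) • (a l - θ (a l))) : Set A)
      = {x : A | θ x = -x} := by
  have hθθ : ∀ x, θ (θ x) = x := fun x => AlgHom.congr_fun hθ x
  set R := AlgHom.equalizer θ (AlgHom.id k A) with hR
  set M := Submodule.span ↥R (Set.range fun l => (⅟(2 : k)) • (a l - θ (a l))) with hM
  have two : ∀ z : A, (⅟(2:k)) • (z + z) = z := fun z => by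
    rw [← two_smul k z, smul_smul, invOf_mul_self, one_smul]
  have key : ∀ x : A, (⅟(2:k)) • (x - θ x) ∈ M := by
    intro x
    have hx : x ∈ Algebra.adjoin k (Set.range a) := hgen ▸ Algebra.mem_top
    induction hx using Algebra.adjoin_induction with
    | mem x hx =>
      obtain ⟨l, rfl⟩ := hx
      exact Submodule.subset_span ⟨l, rfl⟩
    | algebraMap r => simp [AlgHom.commutes]
    | add x y hx hy ihx ihy =>
      have h : (⅟(2:k)) • (x + y - θ (x + y))
          = (⅟(2:k)) • (x - θ x) + (⅟(2:k)) • (y - θ y) := by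
        rw [map_add, ← smul_add]
        congr 1
        ring
      rw [h]; exact M.add_mem ihx ihy
    | mul x y hx hy ihx ihy =>
      have hxp : ((⅟(2:k)) • (x + θ x)) ∈ R := by
        rw [hR, AlgHom.mem_equalizer, map_smul, map_add, hθθ, add_comm]
        rfl
      have hyp : ((⅟(2:k)) • (y + θ y)) ∈ R := by
        rw [hR, AlgHom.mem_equalizer, map_smul, map_add, hθθ, add_comm]
        rfl
      have heq : (⅟(2:k)) • (x * y - θ (x * y))
          = ((⅟(2:k)) • (x + θ x)) * ((⅟(2:k)) • (y - θ y))
            + ((⅟(2:k)) • (y + θ y)) * ((⅟(2:k)) • (x - θ x)) := by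
        rw [map_mul, smul_mul_smul_comm, smul_mul_smul_comm, ← smul_add]
        have : (x + θ x) * (y - θ y) + (y + θ y) * (x - θ x)
            = (x * y - θ x * θ y) + (x * y - θ x * θ y) := by ring
        rw [this, ← smul_smul, two]
      rw [heq]
      exact M.add_mem
        (by simpa [Subalgebra.smul_def] using M.smul_mem ⟨_, hxp⟩ ihy)
        (by simpa [Subalgebra.smul_def] using M.smul_mem ⟨_, hyp⟩ ihx)
  ext x
  simp only [SetLike.mem_coe, Set.mem_setOf_eq]
  constructor
  · intro hx
    refine Submodule.span_induction ?_ ?_ ?_ ?_ hx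
    · rintro _ ⟨l, rfl⟩
      rw [map_smul, map_sub, hθθ, ← smul_neg, neg_sub]
    · simp
    · intro u v _ _ hu hv
      rw [map_add, hu, hv, neg_add]
    · intro r u _ hu
      have hr : θ (↑r : A) = ↑r := r.2
      simp only [Subalgebra.smul_def, smul_eq_mul]
      rw [map_mul, hu, hr, mul_neg]
  · intro hx
    have h := key x
    rwa [hx, sub_neg_eq_add, two] at h
end

section
/- Let {a_λ}_{λ∈Λ} generate A as a k-algebra. Then the contraction algebra 𝐀 is generated as a k[t]-algebra by the elements a_{λ+} and (1/√t)·a_{λ−} for λ ∈ Λ. -/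
open LaurentPolynomial

section Aux

variable {k A : Type*} [CommRing k] [CommRing A] [Algebra k A] [Invertible (2 : k)]

lemma aux_TT {A : Type*} [CommRing A] :
    (T (-1) : LaurentPolynomial A) * T (-1) * T 2 = 1 := by
  rw [← T_add, ← T_add]; norm_num

/-- Every element of `A` has its symmetric and (twisted) antisymmetric part in `B`. -/
lemma aux_all {Λ : Type*} (θ : A →ₐ[k] A) (a : Λ → A)
    (hgen : Algebra.adjoin k (Set.range a) = ⊤)
    (B : Subalgebra k (LaurentPolynomial A)) (hT : (T 2 : LaurentPolynomial A) ∈ B)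
    (hgens : ∀ l, (C (⅟(2:k) • (a l + θ (a l))) : LaurentPolynomial A) ∈ B ∧
      (C (⅟(2:k) • (a l - θ (a l))) * T (-1) : LaurentPolynomial A) ∈ B)
    (x : A) :
    (C (⅟(2:k) • (x + θ x)) : LaurentPolynomial A) ∈ B ∧
      (C (⅟(2:k) • (x - θ x)) * T (-1) : LaurentPolynomial A) ∈ B := by
  have h2 : (algebraMap k A) ⅟(2:k) * 2 = 1 := by
    rw [← map_ofNat (algebraMap k A) 2, ← map_mul, invOf_mul_self, map_one]
  have hx : x ∈ Algebra.adjoin k (Set.range a) := hgen ▸ Algebra.mem_top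
  induction hx using Algebra.adjoin_induction with
  | mem x hx =>
    obtain ⟨l, rfl⟩ := hx
    exact hgens l
  | algebraMap r =>
    have hc : θ ((algebraMap k A) r) = (algebraMap k A) r := θ.commutes r
    constructor
    · have : ⅟(2:k) • ((algebraMap k A) r + θ ((algebraMap k A) r)) = (algebraMap k A) r := by
        rw [hc, ← two_smul k ((algebraMap k A) r), smul_smul, invOf_mul_self, one_smul]
      rw [this, ← LaurentPolynomial.algebraMap_apply]
      exact B.algebraMap_mem r
    · have : ⅟(2:k) • ((algebraMap k A) r - θ ((algebraMap k A) r)) = 0 := by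
        rw [hc, sub_self, smul_zero]
      rw [this, map_zero, zero_mul]
      exact B.zero_mem
  | add x y hx' hy' ihx ihy =>
    obtain ⟨hx1, hx2⟩ := ihx
    obtain ⟨hy1, hy2⟩ := ihy
    constructor
    · have : ⅟(2:k) • (x + y + θ (x + y)) = ⅟(2:k) • (x + θ x) + ⅟(2:k) • (y + θ y) := by
        rw [map_add, ← smul_add]; congr 1; ring
      rw [this, map_add]
      exact B.add_mem hx1 hy1
    · have : ⅟(2:k) • (x + y - θ (x + y)) = ⅟(2:k) • (x - θ x) + ⅟(2:k) • (y - θ y) := by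
        rw [map_add, ← smul_add]; congr 1; ring
      rw [this, map_add, add_mul]
      exact B.add_mem hx2 hy2
  | mul x y hx' hy' ihx ihy =>
    obtain ⟨hx1, hx2⟩ := ihx
    obtain ⟨hy1, hy2⟩ := ihy
    have key₁ : ⅟(2:k) • (x * y + θ (x * y)) =
        (⅟(2:k) • (x + θ x)) * (⅟(2:k) • (y + θ y)) +
        (⅟(2:k) • (x - θ x)) * (⅟(2:k) • (y - θ y)) := by
      simp only [map_mul, Algebra.smul_def]
      linear_combination (-(algebraMap k A ⅟(2:k) * (x * y + θ x * θ y))) * h2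
    have key₂ : ⅟(2:k) • (x * y - θ (x * y)) =
        (⅟(2:k) • (x + θ x)) * (⅟(2:k) • (y - θ y)) +
        (⅟(2:k) • (x - θ x)) * (⅟(2:k) • (y + θ y)) := by
      simp only [map_mul, Algebra.smul_def]
      linear_combination (-(algebraMap k A ⅟(2:k) * (x * y - θ x * θ y))) * h2
    constructor
    · rw [key₁, map_add, map_mul, map_mul]
      refine B.add_mem (B.mul_mem hx1 hy1) ?_
      have hmem := B.mul_mem (B.mul_mem hx2 hy2) hT
      have eq : C (⅟(2:k) • (x - θ x)) * T (-1) * (C (⅟(2:k) • (y - θ y)) * T (-1)) * T 2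
          = C (⅟(2:k) • (x - θ x)) * C (⅟(2:k) • (y - θ y)) := by
        have h := aux_TT (A := A)
        linear_combination (C (⅟(2:k) • (x - θ x)) * C (⅟(2:k) • (y - θ y))) * h
      rwa [eq] at hmem
    · rw [key₂, map_add, map_mul, map_mul, add_mul]
      refine B.add_mem ?_ ?_
      · have hmem := B.mul_mem hx1 hy2
        rwa [← mul_assoc] at hmem
      · have hmem := B.mul_mem hx2 hy1
        have eq : C (⅟(2:k) • (x - θ x)) * T (-1) * C (⅟(2:k) • (y + θ y))
            = C (⅟(2:k) • (x - θ x)) * C (⅟(2:k) • (y + θ y)) * T (-1) := by ring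
        rwa [eq] at hmem

end Aux

theorem contraction_generators
    (k A Λ : Type*) [CommRing k] [CommRing A] [Algebra k A] [Invertible (2 : k)]
    (θ : A →ₐ[k] A) (hθ : θ.comp θ = AlgHom.id k A)
    (a : Λ → A) (hgen : Algebra.adjoin k (Set.range a) = ⊤) :
    contraction k A θ =
      Algebra.adjoin k (insert (T 2)
        ((Set.range fun l => (C ((⅟(2 : k)) • (a l + θ (a l))) : LaurentPolynomial A)) ∪
         (Set.range fun l => (C ((⅟(2 : k)) • (a l - θ (a l))) * T (-1) : LaurentPolynomial A)))) := by
  have hθθ : ∀ x, θ (θ x) = x := fun x => AlgHom.congr_fun hθ x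
  set B := Algebra.adjoin k (insert (T 2)
        ((Set.range fun l => (C ((⅟(2 : k)) • (a l + θ (a l))) : LaurentPolynomial A)) ∪
         (Set.range fun l => (C ((⅟(2 : k)) • (a l - θ (a l))) * T (-1) : LaurentPolynomial A))))
    with hB
  have hT : (T 2 : LaurentPolynomial A) ∈ B := Algebra.subset_adjoin (Set.mem_insert _ _)
  have hgens : ∀ l, (C (⅟(2:k) • (a l + θ (a l))) : LaurentPolynomial A) ∈ B ∧
      (C (⅟(2:k) • (a l - θ (a l))) * T (-1) : LaurentPolynomial A) ∈ B := fun l =>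
    ⟨Algebra.subset_adjoin (Set.mem_insert_iff.mpr (Or.inr (Or.inl ⟨l, rfl⟩))),
     Algebra.subset_adjoin (Set.mem_insert_iff.mpr (Or.inr (Or.inr ⟨l, rfl⟩)))⟩
  apply le_antisymm
  · apply Algebra.adjoin_le
    rintro f (rfl | ⟨x, hx, rfl⟩ | ⟨x, hx, rfl⟩)
    · exact hT
    · have := (aux_all θ a hgen B hT hgens x).1
      rwa [hx, ← two_smul k x, smul_smul, invOf_mul_self, one_smul] at this
    · have := (aux_all θ a hgen B hT hgens x).2
      rwa [hx, sub_neg_eq_add, ← two_smul k x, smul_smul, invOf_mul_self, one_smul] at this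
  · apply Algebra.adjoin_mono
    rintro f (rfl | ⟨l, rfl⟩ | ⟨l, rfl⟩)
    · exact Set.mem_insert _ _
    · refine Set.mem_insert_iff.mpr (Or.inr (Or.inl ⟨⅟(2:k) • (a l + θ (a l)), ?_, rfl⟩))
      rw [map_smul, map_add, hθθ, add_comm]
    · refine Set.mem_insert_iff.mpr (Or.inr (Or.inr ⟨⅟(2:k) • (a l - θ (a l)), ?_, rfl⟩))
      rw [map_smul, map_sub, hθθ, ← smul_neg, neg_sub]
end

section
/- If A is a finitely generated k-algebra, then the contraction algebra 𝐀 is a finitely generated k[t]-algebra. -/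
open LaurentPolynomial

/-!
STATEMENT 9: if `A` is a finitely generated `k`-algebra, then the contraction
algebra `𝐀` is a finitely generated `k[t]`-algebra: it is generated over `k`
by `t` together with finitely many further elements. -/
theorem contraction_finiteType
    (k A : Type*) [CommRing k] [CommRing A] [Algebra k A] [Invertible (2 : k)]
    (θ : A →ₐ[k] A) (hθ : θ.comp θ = AlgHom.id k A)
    (hfg : Algebra.FiniteType k A) :
    ∃ s : Finset (LaurentPolynomial A),
      contraction k A θ = Algebra.adjoin k (insert (T 2) (s : Set (LaurentPolynomial A))) := by
  classical
  obtain ⟨S, hS⟩ := hfg.1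
  set e : A := algebraMap k A (⅟(2:k)) with he_def
  have h2 : 2 * e = 1 := by
    rw [he_def, ← map_ofNat (algebraMap k A) 2, ← map_mul, mul_invOf_self, map_one]
  have hθe : θ e = e := θ.commutes _
  have hθθ : ∀ x, θ (θ x) = x := fun x => AlgHom.congr_fun hθ x
  set p : A → A := fun x => e * (x + θ x) with hp_def
  set m : A → A := fun x => e * (x - θ x) with hm_def
  have hθp : ∀ x, θ (p x) = p x := by
    intro x; simp only [hp_def, map_mul, map_add, hθθ, hθe]; ring
  have hθm : ∀ x, θ (m x) = - m x := by
    intro x; simp only [hm_def, map_mul, map_sub, hθθ, hθe]; ring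
  have hpfix : ∀ x, θ x = x → p x = x := by
    intro x hx; simp only [hp_def, hx]; linear_combination x * h2
  have hmfix : ∀ x, θ x = -x → m x = x := by
    intro x hx; simp only [hm_def, hx]; linear_combination x * h2
  have hpmul : ∀ x y, p (x * y) = p x * p y + m x * m y := by
    intro x y; simp only [hp_def, hm_def, map_mul]
    linear_combination (-(e * (x * y + θ x * θ y))) * h2
  have hmmul : ∀ x y, m (x * y) = p x * m y + m x * p y := by
    intro x y; simp only [hp_def, hm_def, map_mul]
    linear_combination (-(e * (x * y - θ x * θ y))) * h2
  refine ⟨(S.image fun x => (C (p x) : LaurentPolynomial A)) ∪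
      (S.image fun x => C (m x) * T (-1)), ?_⟩
  set s : Finset (LaurentPolynomial A) := (S.image fun x => (C (p x) : LaurentPolynomial A)) ∪
      (S.image fun x => C (m x) * T (-1)) with hs_def
  set B := Algebra.adjoin k (insert (T 2) (s : Set (LaurentPolynomial A))) with hB_def
  have hT2 : (T 2 : LaurentPolynomial A) ∈ B := Algebra.subset_adjoin (Set.mem_insert _ _)
  have key : ∀ x : A, (C (p x) : LaurentPolynomial A) ∈ B ∧ C (m x) * T (-1) ∈ B := by
    intro x
    have hx : x ∈ Algebra.adjoin k (S : Set A) := hS ▸ Algebra.mem_top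
    induction hx using Algebra.adjoin_induction with
    | mem y hy =>
      constructor
      · exact Algebra.subset_adjoin (Set.mem_insert_iff.mpr (Or.inr (by
          simp only [hs_def, Finset.coe_union, Set.mem_union, Finset.coe_image, Set.mem_image]
          exact Or.inl ⟨y, hy, rfl⟩)))
      · exact Algebra.subset_adjoin (Set.mem_insert_iff.mpr (Or.inr (by
          simp only [hs_def, Finset.coe_union, Set.mem_union, Finset.coe_image, Set.mem_image]
          exact Or.inr ⟨y, hy, rfl⟩)))
    | algebraMap r =>
      constructor
      · have : p ((algebraMap k A) r) = algebraMap k A r := hpfix _ (θ.commutes r)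
        rw [this]
        exact Subalgebra.algebraMap_mem B r
      · have : m ((algebraMap k A) r) = 0 := by
          simp [hm_def, θ.commutes r]
        rw [this, map_zero, zero_mul]; exact zero_mem B
    | add x y hx hy ihx ihy =>
      have hpa : p (x + y) = p x + p y := by simp only [hp_def, map_add]; ring
      have hma : m (x + y) = m x + m y := by simp only [hm_def, map_add]; ring
      refine ⟨?_, ?_⟩
      · rw [hpa, map_add]; exact add_mem ihx.1 ihy.1
      · rw [hma, map_add, add_mul]; exact add_mem ihx.2 ihy.2
    | mul x y hx hy ihx ihy =>
      have hT : (T (-1) * T (-1) * T 2 : LaurentPolynomial A) = 1 := by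
        rw [← T_add, ← T_add]; norm_num
      refine ⟨?_, ?_⟩
      · have h1 : (C (p (x * y)) : LaurentPolynomial A)
            = C (p x) * C (p y) + (C (m x) * T (-1)) * (C (m y) * T (-1)) * T 2 := by
          rw [hpmul, map_add, map_mul C (p x) (p y), map_mul C (m x) (m y),
            show ((C (m x) * T (-1)) * (C (m y) * T (-1)) * T 2 : LaurentPolynomial A)
              = C (m x) * C (m y) * (T (-1) * T (-1) * T 2) by ring, hT, mul_one]
        rw [h1]
        exact add_mem (mul_mem ihx.1 ihy.1) (mul_mem (mul_mem ihx.2 ihy.2) hT2)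
      · have h1 : (C (m (x * y)) * T (-1) : LaurentPolynomial A)
            = C (p x) * (C (m y) * T (-1)) + (C (m x) * T (-1)) * C (p y) := by
          rw [hmmul, map_add, map_mul C (p x) (m y), map_mul C (m x) (p y)]; ring
        rw [h1]
        exact add_mem (mul_mem ihx.1 ihy.2) (mul_mem ihx.2 ihy.1)
  apply le_antisymm
  · apply Algebra.adjoin_le
    rintro f (rfl | ⟨a, ha, rfl⟩ | ⟨a, ha, rfl⟩)
    · exact hT2
    · have := (key a).1; rwa [hpfix a ha] at this
    · have := (key a).2; rwa [hmfix a ha] at this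
  · apply Algebra.adjoin_le
    rintro f (rfl | hf)
    · exact Algebra.subset_adjoin (Set.mem_insert _ _)
    · simp only [hs_def, Finset.coe_union, Set.mem_union, Finset.coe_image, Set.mem_image] at hf
      rcases hf with ⟨x, -, rfl⟩ | ⟨x, -, rfl⟩
      · refine Algebra.subset_adjoin (Set.mem_insert_iff.mpr (Or.inr (Set.mem_union_left _ ?_)))
        exact ⟨p x, hθp x, rfl⟩
      · refine Algebra.subset_adjoin (Set.mem_insert_iff.mpr (Or.inr (Set.mem_union_right _ ?_)))
        exact ⟨m x, hθm x, rfl⟩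
end

section
/- Let f ∈ A^θ, i.e., θ(f) = f. Then θ extends uniquely to an involution of the localization A_f, and the contraction algebra of (A_f, θ) is canonically isomorphic to the localization 𝐀_f of the contraction algebra 𝐀 of (A, θ) at the element f ∈ A^θ ⊆ 𝐀. -/
/-!
The map `A[√t^{±1}] → A_f[√t^{±1}]` sends the generators `t`, `a` (`θ a = a`) and `a/√t`
(`θ a = -a`) of `𝐀` to generators of the contraction algebra of `A_f`, and the induced map
exhibits the latter as the localization of `𝐀` away from `f`:
* `f` becomes a unit, and its inverse is again `θ`-fixed;
* a generator `b` or `b/√t` of the target with `θ b = ±b` is, up to a power of `f`, the image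
  of one of `𝐀`: if `b = a/fⁿ` then `θ a = ±a` holds in `A_f`, hence in `A` after multiplying
  `a` by a further power of `f`;
* a Laurent polynomial over `A` that dies over `A_f` dies coefficientwise, so a single power of
  `f` kills all of its (finitely many) coefficients.
-/

open LaurentPolynomial

theorem C_mem_contraction {k A : Type*} [CommRing k] [CommRing A] [Algebra k A]
    (θ : A →ₐ[k] A) {f : A} (hf : θ f = f) :
    (C f : LaurentPolynomial A) ∈ contraction k A θ :=
  Algebra.subset_adjoin (Set.mem_insert_iff.mpr
    (Or.inr (Set.mem_union_left _ ⟨f, hf, rfl⟩)))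

namespace LaurentPolynomial

variable {R S : Type*} [CommRing R] [CommRing S]

theorem coeff_C_mul (r : R) (p : LaurentPolynomial R) (m : ℤ) :
    (C r * p).coeff m = r * p.coeff m := by
  rw [← smul_eq_C_mul]
  rfl

theorem exists_C_pow_mul_eq_zero {r : R} {p : LaurentPolynomial R}
    (h : ∀ m, ∃ j : ℕ, r ^ j * p.coeff m = 0) : ∃ N : ℕ, C r ^ N * p = 0 := by
  choose j hj using h
  refine ⟨p.coeff.support.sup j, LaurentPolynomial.ext fun m => ?_⟩
  rw [← map_pow, coeff_C_mul]
  by_cases hm : m ∈ p.coeff.support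
  · obtain ⟨d, hd⟩ := Nat.exists_eq_add_of_le (Finset.le_sup (f := j) hm)
    rw [hd, pow_add, mul_right_comm, hj, zero_mul]
    rfl
  · rw [Finsupp.notMem_support_iff.mp hm, mul_zero]
    rfl

theorem apply_eq_mapRingHom_apply {F : Type*}
    [FunLike F (LaurentPolynomial R) (LaurentPolynomial S)]
    [AddMonoidHomClass F (LaurentPolynomial R) (LaurentPolynomial S)] (Φ : F) (g : R →+* S)
    (hΦ : ∀ a n, Φ (C a * T n) = C (g a) * T n) (p : LaurentPolynomial R) :
    Φ p = AddMonoidAlgebra.mapRingHom ℤ g p := by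
  induction p using LaurentPolynomial.induction_on' with
  | add p q hp hq => rw [map_add, map_add, hp, hq]
  | C_mul_T n a =>
    rw [hΦ, ← single_eq_C_mul_T, ← single_eq_C_mul_T, AddMonoidAlgebra.mapRingHom_single]

end LaurentPolynomial

section Contraction

variable {k A B : Type*} [CommRing k] [CommRing A] [CommRing B] [Algebra k A] [Algebra k B]

theorem T_two_mem_contraction (θ : A →ₐ[k] A) :
    (T 2 : LaurentPolynomial A) ∈ contraction k A θ :=
  Algebra.subset_adjoin (Set.mem_insert _ _)

theorem C_mul_T_neg_one_mem_contraction (θ : A →ₐ[k] A) {a : A} (ha : θ a = -a) :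
    C a * T (-1) ∈ contraction k A θ :=
  Algebra.subset_adjoin (Set.mem_insert_iff.mpr (Or.inr (Set.mem_union_right _ ⟨a, ha, rfl⟩)))

theorem contraction_le_comap (θ : A →ₐ[k] A) (θ' : B →ₐ[k] B) (g : A →+* B)
    (hg : ∀ x, θ' (g x) = g (θ x)) (Φ : LaurentPolynomial A →ₐ[k] LaurentPolynomial B)
    (hΦ : ∀ a n, Φ (C a * T n) = C (g a) * T n) :
    contraction k A θ ≤ (contraction k B θ').comap Φ := by
  have hΦT : Φ (T 2) = T 2 := by simpa using hΦ 1 2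
  have hΦC (a : A) : Φ (C a) = C (g a) := by simpa using hΦ a 0
  refine Algebra.adjoin_le ?_
  rintro p (rfl | ⟨a, ha, rfl⟩ | ⟨a, ha, rfl⟩)
  · simpa [hΦT] using T_two_mem_contraction (k := k) θ'
  · have : θ' (g a) = g a := by rw [hg, ha]
    simpa [hΦC] using C_mem_contraction θ' this
  · have : θ' (g a) = -g a := by rw [hg, ha, map_neg]
    simpa [hΦ] using C_mul_T_neg_one_mem_contraction θ' this

theorem isUnit_C_of_isUnit_of_apply_eq (θ : B →ₐ[k] B) {b : B} (hb : IsUnit b)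
    (hθb : θ b = b) :
    IsUnit (⟨C b, C_mem_contraction θ hθb⟩ : contraction k B θ) := by
  obtain ⟨u, rfl⟩ := hb
  have hinv : θ ↑u⁻¹ = ↑u⁻¹ := by
    have hu : Units.map (θ : B →* B) u = u := Units.ext hθb
    calc θ ↑u⁻¹ = ↑(Units.map (θ : B →* B) u)⁻¹ := (Units.coe_map_inv _ _).symm
      _ = ↑u⁻¹ := by rw [hu]
  refine IsUnit.of_mul_eq_one (⟨C ↑u⁻¹, C_mem_contraction θ hinv⟩ : contraction k B θ) ?_
  apply Subtype.ext
  simp [← map_mul]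

noncomputable def contractionMap (θ : A →ₐ[k] A) (θ' : B →ₐ[k] B) (g : A →+* B)
    (hg : ∀ x, θ' (g x) = g (θ x)) (Φ : LaurentPolynomial A →ₐ[k] LaurentPolynomial B)
    (hΦ : ∀ a n, Φ (C a * T n) = C (g a) * T n) :
    contraction k A θ →ₐ[k] contraction k B θ' :=
  (Φ.comp (contraction k A θ).val).codRestrict _ fun p =>
    contraction_le_comap θ θ' g hg Φ hΦ p.2

end Contraction

namespace IsLocalization.Away

variable {k A B : Type*} [CommRing k] [CommRing A] [CommRing B] [Algebra A B]
  (f : A) [IsLocalization.Away f B]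

theorem exists_mul_pow_eq_algebraMap_of_apply_eq_mul {F G : Type*} [FunLike F A A]
    [RingHomClass F A A] [FunLike G B B] [RingHomClass G B B] (θ : F) (θ' : G)
    (hf : θ f = f) (hθ' : ∀ x, θ' (algebraMap A B x) = algebraMap A B (θ x)) (ε : A) {b : B}
    (hb : θ' b = algebraMap A B ε * b) :
    ∃ (n : ℕ) (a : A), θ a = ε * a ∧ b * algebraMap A B f ^ n = algebraMap A B a := by
  obtain ⟨n, a₀, ha₀⟩ := surj f b
  have hθa₀ : algebraMap A B (θ a₀) = algebraMap A B (ε * a₀) := by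
    rw [← hθ', ← ha₀, map_mul, map_pow, hθ', hf, hb, map_mul, ← ha₀, mul_assoc]
  obtain ⟨j, hj⟩ := exists_of_eq f hθa₀
  refine ⟨n + j, f ^ j * a₀, ?_, ?_⟩
  · rw [map_mul, map_pow, hf, hj, mul_left_comm]
  · rw [pow_add, ← mul_assoc, ha₀, map_mul, map_pow, mul_comm]

variable [Algebra k A] [Algebra k B]

theorem existsUnique_algHom_extend [IsScalarTower k A B] {C : Type*} [CommRing C]
    [Algebra k C] (φ : A →ₐ[k] C) (hφ : IsUnit (φ f)) :
    ∃! ψ : B →ₐ[k] C, ∀ x, ψ (algebraMap A B x) = φ x :=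
  ⟨liftAlgHom f hφ, lift_eq f hφ, fun _ hψ => IsLocalization.algHom_ext (Submonoid.powers f) <|
    AlgHom.ext fun x => (hψ x).trans (lift_eq f hφ x).symm⟩

end IsLocalization.Away

section ContractionLocalization

variable {k A B : Type*} [CommRing k] [CommRing A] [CommRing B] [Algebra k A] [Algebra k B]
  [Algebra A B] (f : A) [IsLocalization.Away f B]

theorem exists_C_pow_mul_eq_of_map_eq (Φ : LaurentPolynomial A →ₐ[k] LaurentPolynomial B)
    (hΦ : ∀ a n, Φ (C a * T n) = C (algebraMap A B a) * T n) {p q : LaurentPolynomial A}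
    (h : Φ p = Φ q) : ∃ N : ℕ, C f ^ N * p = C f ^ N * q := by
  suffices ∃ N : ℕ, C f ^ N * (p - q) = 0 by simpa only [mul_sub, sub_eq_zero] using this
  refine exists_C_pow_mul_eq_zero fun m => ?_
  have hm : algebraMap A B ((p - q).coeff m) = algebraMap A B 0 := by
    rw [← AddMonoidAlgebra.coeff_mapRingHom, ← apply_eq_mapRingHom_apply Φ _ hΦ, map_sub, h,
      sub_self, map_zero]
    rfl
  simpa using IsLocalization.Away.exists_of_eq f hm

theorem exists_mul_pow_eq_of_mem_contraction (θ : A →ₐ[k] A) (θ' : B →ₐ[k] B)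
    (hf : θ f = f)
    (hθ' : ∀ x, θ' (algebraMap A B x) = algebraMap A B (θ x))
    (Φ : LaurentPolynomial A →ₐ[k] LaurentPolynomial B)
    (hΦ : ∀ a n, Φ (C a * T n) = C (algebraMap A B a) * T n)
    {z : LaurentPolynomial B} (hz : z ∈ contraction k B θ') :
    ∃ n : ℕ, ∃ q ∈ contraction k A θ, z * Φ (C f) ^ n = Φ q := by
  have hΦC (a : A) : Φ (C a) = C (algebraMap A B a) := by simpa using hΦ a 0
  have hCf := C_mem_contraction θ hf
  induction hz using Algebra.adjoin_induction with
  | mem z hz =>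
    obtain rfl | ⟨b, hb, rfl⟩ | ⟨b, hb, rfl⟩ := hz
    · exact ⟨0, T 2, T_two_mem_contraction θ, by simpa using (hΦ 1 2).symm⟩
    · obtain ⟨n, a, ha, hab⟩ :=
        IsLocalization.Away.exists_mul_pow_eq_algebraMap_of_apply_eq_mul f θ θ' hf hθ' 1 (b := b)
          (by rw [hb, map_one, one_mul])
      refine ⟨n, C a, C_mem_contraction θ (by rw [ha, one_mul]), ?_⟩
      rw [hΦC, hΦC, ← map_pow, ← map_mul, hab]
    · obtain ⟨n, a, ha, hab⟩ :=
        IsLocalization.Away.exists_mul_pow_eq_algebraMap_of_apply_eq_mul f θ θ' hf hθ' (-1)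
          (b := b) (by rw [hb, map_neg, map_one, neg_one_mul])
      refine ⟨n, C a * T (-1), C_mul_T_neg_one_mem_contraction θ (by rw [ha, neg_one_mul]), ?_⟩
      rw [hΦ, hΦC, ← map_pow, mul_right_comm, ← map_mul, hab]
  | algebraMap r =>
    exact ⟨0, algebraMap k _ r, Subalgebra.algebraMap_mem _ r, by
      rw [pow_zero, mul_one, AlgHom.commutes]⟩
  | add x y _ _ hx hy =>
    obtain ⟨n₁, q₁, hq₁, e₁⟩ := hx
    obtain ⟨n₂, q₂, hq₂, e₂⟩ := hy
    refine ⟨n₁ + n₂, q₁ * C f ^ n₂ + q₂ * C f ^ n₁,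
      add_mem (mul_mem hq₁ (pow_mem hCf _)) (mul_mem hq₂ (pow_mem hCf _)), ?_⟩
    rw [map_add, map_mul, map_mul, map_pow, map_pow, ← e₁, ← e₂]
    ring
  | mul x y _ _ hx hy =>
    obtain ⟨n₁, q₁, hq₁, e₁⟩ := hx
    obtain ⟨n₂, q₂, hq₂, e₂⟩ := hy
    refine ⟨n₁ + n₂, q₁ * q₂, mul_mem hq₁ hq₂, ?_⟩
    rw [map_mul, ← e₁, ← e₂]
    ring

theorem contraction_isLocalizationAway (θ : A →ₐ[k] A) (θ' : B →ₐ[k] B) (hf : θ f = f)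
    (hθ' : ∀ x, θ' (algebraMap A B x) = algebraMap A B (θ x))
    (Φ : LaurentPolynomial A →ₐ[k] LaurentPolynomial B)
    (hΦ : ∀ a n, Φ (C a * T n) = C (algebraMap A B a) * T n) :
    letI := (contractionMap θ θ' (algebraMap A B) hθ' Φ hΦ).toRingHom.toAlgebra
    IsLocalization.Away (⟨C f, C_mem_contraction θ hf⟩ : contraction k A θ)
      (contraction k B θ') := by
  let _ := (contractionMap θ θ' (algebraMap A B) hθ' Φ hΦ).toRingHom.toAlgebra
  refine IsLocalization.Away.mk _ ?_ (fun z => ?_) (fun p q h => ?_)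
  · have hfB : θ' (algebraMap A B f) = algebraMap A B f := by rw [hθ', hf]
    convert isUnit_C_of_isUnit_of_apply_eq θ' (IsLocalization.Away.algebraMap_isUnit f) hfB
    exact show Φ (C f) = _ by simpa using hΦ f 0
  · obtain ⟨n, q, hq, e⟩ := exists_mul_pow_eq_of_mem_contraction f θ θ' hf hθ' Φ hΦ z.2
    exact ⟨n, ⟨q, hq⟩, Subtype.ext e⟩
  · obtain ⟨N, hN⟩ := exists_C_pow_mul_eq_of_map_eq f Φ hΦ (congrArg Subtype.val h)
    exact ⟨N, Subtype.ext hN⟩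

end ContractionLocalization

theorem contraction_localization_fixed_general
    (k A : Type*) [CommRing k] [CommRing A] [Algebra k A]
    (θ : A →ₐ[k] A) (hθ : θ.comp θ = AlgHom.id k A)
    (f : A) (hf : θ f = f) :
    (∃! θ' : Localization.Away f →ₐ[k] Localization.Away f,
        ∀ x : A, θ' (algebraMap A (Localization.Away f) x) =
          algebraMap A (Localization.Away f) (θ x)) ∧
    ∀ (θ' : Localization.Away f →ₐ[k] Localization.Away f),
      (∀ x : A, θ' (algebraMap A (Localization.Away f) x) =
          algebraMap A (Localization.Away f) (θ x)) →
      (θ'.comp θ' = AlgHom.id k (Localization.Away f)) ∧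
      ∀ (Φ : LaurentPolynomial A →ₐ[k] LaurentPolynomial (Localization.Away f)),
        (∀ (a : A) (n : ℤ),
          Φ (C a * T n) = C (algebraMap A (Localization.Away f) a) * T n) →
        ∃ e : ↥(contraction k (Localization.Away f) θ') ≃ₐ[k]
            Localization.Away (⟨C f, C_mem_contraction θ hf⟩ : ↥(contraction k A θ)),
          ∀ (x : ↥(contraction k A θ))
            (hx : Φ (x : LaurentPolynomial A) ∈ contraction k (Localization.Away f) θ'),
            e ⟨Φ (x : LaurentPolynomial A), hx⟩ =
              algebraMap ↥(contraction k A θ)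
                (Localization.Away
                  (⟨C f, C_mem_contraction θ hf⟩ : ↥(contraction k A θ))) x := by
  refine ⟨IsLocalization.Away.existsUnique_algHom_extend f
      ((IsScalarTower.toAlgHom k A _).comp θ) ?_, fun θ' hθ' => ⟨?_, fun Φ hΦ => ?_⟩⟩
  · simpa [hf] using IsLocalization.Away.algebraMap_isUnit f
  · refine IsLocalization.algHom_ext (Submonoid.powers f) (AlgHom.ext fun x => ?_)
    change θ' (θ' (algebraMap A _ x)) = algebraMap A _ x
    rw [hθ', hθ', ← AlgHom.comp_apply, hθ, AlgHom.id_apply]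
  · let ψ := contractionMap θ θ' _ hθ' Φ hΦ
    let _ := ψ.toRingHom.toAlgebra
    have : IsScalarTower k (contraction k A θ) (contraction k (Localization.Away f) θ') :=
      IsScalarTower.of_algebraMap_eq fun r => (ψ.commutes r).symm
    have := contraction_isLocalizationAway f θ θ' hf hθ' Φ hΦ
    let b : contraction k A θ := ⟨C f, C_mem_contraction θ hf⟩
    let e := IsLocalization.algEquiv (Submonoid.powers b) (contraction k (Localization.Away f) θ')
      (Localization.Away b)
    exact ⟨e.restrictScalars k, fun x _ => e.commutes x⟩

theorem contraction_localization_fixed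
    (k A : Type*) [CommRing k] [CommRing A] [Algebra k A] [Invertible (2 : k)]
    (θ : A →ₐ[k] A) (hθ : θ.comp θ = AlgHom.id k A)
    (f : A) (hf : θ f = f) :
    (∃! θ' : Localization.Away f →ₐ[k] Localization.Away f,
        ∀ x : A, θ' (algebraMap A (Localization.Away f) x) =
          algebraMap A (Localization.Away f) (θ x)) ∧
    ∀ (θ' : Localization.Away f →ₐ[k] Localization.Away f),
      (∀ x : A, θ' (algebraMap A (Localization.Away f) x) =
          algebraMap A (Localization.Away f) (θ x)) →
      (θ'.comp θ' = AlgHom.id k (Localization.Away f)) ∧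
      ∀ (Φ : LaurentPolynomial A →ₐ[k] LaurentPolynomial (Localization.Away f)),
        (∀ (a : A) (n : ℤ),
          Φ (C a * T n) = C (algebraMap A (Localization.Away f) a) * T n) →
        ∃ e : ↥(contraction k (Localization.Away f) θ') ≃ₐ[k]
            Localization.Away (⟨C f, C_mem_contraction θ hf⟩ : ↥(contraction k A θ)),
          ∀ (x : ↥(contraction k A θ))
            (hx : Φ (x : LaurentPolynomial A) ∈ contraction k (Localization.Away f) θ'),
            e ⟨Φ (x : LaurentPolynomial A), hx⟩ =
              algebraMap ↥(contraction k A θ)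
                (Localization.Away
                  (⟨C f, C_mem_contraction θ hf⟩ : ↥(contraction k A θ))) x :=
  contraction_localization_fixed_general k A θ hθ f hf
end

section
/- Let I ⊆ A be the ideal generated by A^{-θ}. Then for every n ≥ 0, I^n = (A^{-θ})^n ⊕ (A^{-θ})^{n+1}, where (A^{-θ})^n denotes the A^θ-submodule of A spanned by products of n elements of A^{-θ} (with (A^{-θ})^0 = A^θ). -/
/-- The `A^θ`-submodule `(A^{-θ})^n` of `A` spanned by products of `n`
elements of `A^{-θ}` (with `(A^{-θ})^0 = A^θ`, spanned by the empty product). -/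
noncomputable def negPartPow (k A : Type*) [CommRing k] [CommRing A] [Algebra k A]
    (θ : A →ₐ[k] A) (n : ℕ) : Submodule ↥(AlgHom.equalizer θ (AlgHom.id k A)) A :=
  Submodule.span ↥(AlgHom.equalizer θ (AlgHom.id k A))
    {x : A | ∃ g : Fin n → A, (∀ i, θ (g i) = -(g i)) ∧ x = ∏ i, g i}

section Aux

variable {k A : Type*} [CommRing k] [CommRing A] [Algebra k A] (θ : A →ₐ[k] A)

lemma theta_negPartPow (n : ℕ) {x : A} (hx : x ∈ negPartPow k A θ n) :
    θ x = (-1) ^ n * x := by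
  induction hx using Submodule.span_induction with
  | mem x hx =>
    obtain ⟨g, hg, rfl⟩ := hx
    rw [map_prod]
    calc ∏ i, θ (g i) = ∏ i, (-1) * g i := by
          refine Finset.prod_congr rfl fun i _ => ?_
          rw [hg i, neg_one_mul]
      _ = (-1) ^ n * ∏ i, g i := by
          rw [Finset.prod_mul_distrib, Finset.prod_const, Finset.card_univ,
            Fintype.card_fin]
  | zero => simp
  | add x y hx hy ihx ihy => rw [map_add, ihx, ihy, mul_add]
  | smul c x hx ih =>
    have hc : θ (c : A) = (c : A) := c.2
    show θ ((c : A) * x) = (-1) ^ n * ((c : A) * x)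
    rw [map_mul, hc, ih]; ring

lemma mul_mem_negPartPow (m : ℕ) {a x : A} (ha : θ a = -a)
    (hx : x ∈ negPartPow k A θ m) : a * x ∈ negPartPow k A θ (m + 1) := by
  induction hx using Submodule.span_induction with
  | mem x hx =>
    obtain ⟨g, hg, rfl⟩ := hx
    apply Submodule.subset_span
    refine ⟨Fin.cons a g, ?_, ?_⟩
    · intro i
      refine Fin.cases ?_ ?_ i
      · simpa using ha
      · intro j; simpa using hg j
    · rw [Fin.prod_univ_succ]
      simp
  | zero => simp
  | add x y hx hy ihx ihy =>
    rw [mul_add]; exact Submodule.add_mem _ ihx ihy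
  | smul c x hx ih =>
    have : a * (c • x) = c • (a * x) := by
      show a * ((c : A) * x) = (c : A) * (a * x); ring
    rw [this]
    exact Submodule.smul_mem _ _ ih

lemma negPartPow_succ_succ_le (m : ℕ) :
    negPartPow k A θ (m + 2) ≤ negPartPow k A θ m := by
  refine Submodule.span_le.mpr ?_
  rintro x ⟨g, hg, rfl⟩
  have hc : θ (g 0 * g 1) = g 0 * g 1 := by
    rw [map_mul, hg 0, hg 1]; ring
  have hP : (∏ i : Fin m, g i.succ.succ) ∈ negPartPow k A θ m :=
    Submodule.subset_span ⟨fun i => g i.succ.succ, fun i => hg _, rfl⟩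
  have := Submodule.smul_mem (negPartPow k A θ m)
    (⟨g 0 * g 1, hc⟩ : AlgHom.equalizer θ (AlgHom.id k A)) hP
  have heq : (⟨g 0 * g 1, hc⟩ : AlgHom.equalizer θ (AlgHom.id k A)) •
      (∏ i : Fin m, g i.succ.succ) = ∏ i, g i := by
    show (g 0 * g 1) * (∏ i : Fin m, g i.succ.succ) = ∏ i, g i
    have : ∏ i, g i = g 0 * (g (Fin.succ 0) * ∏ i : Fin m, g i.succ.succ) := by
      rw [Fin.prod_univ_succ, Fin.prod_univ_succ]
    rw [this, Fin.succ_zero_eq_one]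
    ring
  rwa [heq] at this

lemma prod_mem_span_pow (m : ℕ) (g : Fin m → A) (hg : ∀ i, θ (g i) = -(g i)) :
    (∏ i, g i) ∈ (Ideal.span {x : A | θ x = -x}) ^ m := by
  induction m with
  | zero => simp
  | succ m ih =>
    rw [Fin.prod_univ_succ, mul_comm, pow_succ]
    exact Ideal.mul_mem_mul (ih _ fun i => hg i.succ) (Ideal.subset_span (hg 0))

end Aux

/-!
STATEMENT 13: let `I ⊆ A` be the ideal generated by `A^{-θ}`.  Then for every
`n ≥ 0` one has `I^n = (A^{-θ})^n ⊕ (A^{-θ})^{n+1}` as `A^θ`-modules. -/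
theorem idealPow_decomposition
    (k A : Type*) [CommRing k] [CommRing A] [Algebra k A] [Invertible (2 : k)]
    (θ : A →ₐ[k] A) (hθ : θ.comp θ = AlgHom.id k A) (n : ℕ) :
    Disjoint (negPartPow k A θ n) (negPartPow k A θ (n + 1)) ∧
    negPartPow k A θ n ⊔ negPartPow k A θ (n + 1) =
      Submodule.restrictScalars ↥(AlgHom.equalizer θ (AlgHom.id k A))
        ((Ideal.span {x : A | θ x = -x}) ^ n : Ideal A) := by
  set t : A := algebraMap k A (⅟(2 : k)) with ht
  have ht2 : t * 2 = 1 := by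
    have : (algebraMap k A) ((⅟(2 : k)) * 2) = 1 := by rw [invOf_mul_self]; simp
    rwa [map_mul, map_ofNat] at this
  have hhalf : ∀ x : A, x + x = 0 → x = 0 := by
    intro x hx
    have : t * (x + x) = 0 := by rw [hx, mul_zero]
    calc x = (t * 2) * x := by rw [ht2, one_mul]
      _ = t * (x + x) := by ring
      _ = 0 := this
  have hθθ : ∀ a : A, θ (θ a) = a := fun a => AlgHom.congr_fun hθ a
  constructor
  · -- disjointness
    rw [Submodule.disjoint_def]
    intro x hx1 hx2
    have e1 := theta_negPartPow θ n hx1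
    have e2 := theta_negPartPow θ (n + 1) hx2
    rw [e1, pow_succ] at e2
    have hsum : (-1 : A) ^ n * (x + x) = 0 := by
      have := e2.symm.trans rfl
      -- (-1)^n * x = (-1)^n * -1 * x
      have h0 : (-1 : A) ^ n * x + (-1 : A) ^ n * x = 0 := by
        calc (-1 : A) ^ n * x + (-1 : A) ^ n * x
            = (-1 : A) ^ n * x - ((-1 : A) ^ n * (-1) * x) := by ring
          _ = 0 := by rw [← e2, ← e1, sub_self]
      calc (-1 : A) ^ n * (x + x) = (-1 : A) ^ n * x + (-1 : A) ^ n * x := by ring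
        _ = 0 := h0
    have hxx : x + x = 0 := by
      have := congrArg (fun y => (-1 : A) ^ n * y) hsum
      simpa [← mul_assoc, ← mul_pow] using this
    exact hhalf x hxx
  · -- the sup equals the restricted ideal power
    -- abbreviations
    set I : Ideal A := Ideal.span {x : A | θ x = -x} with hI
    -- decomposition of arbitrary element
    have hdecomp : ∀ a : A, ∃ p q : A, θ p = p ∧ θ q = -q ∧ p + q = a := by
      intro a
      refine ⟨t * (a + θ a), t * (a - θ a), ?_, ?_, ?_⟩
      · rw [map_mul, map_add, hθθ, ht]
        rw [AlgHom.commutes]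
        ring
      · rw [map_mul, map_sub, hθθ, ht, AlgHom.commutes]
        ring
      · calc t * (a + θ a) + t * (a - θ a) = (t * 2) * a := by ring
          _ = a := by rw [ht2, one_mul]
    -- membership of A^+ and A^- in negPartPow 0 / 1
    have hplus0 : ∀ p : A, θ p = p → p ∈ negPartPow k A θ 0 := by
      intro p hp
      have h1 : (1 : A) ∈ {x : A | ∃ g : Fin 0 → A, (∀ i, θ (g i) = -(g i)) ∧ x = ∏ i, g i} :=
        ⟨fun i => i.elim0, fun i => i.elim0, by simp⟩
      have := Submodule.smul_mem (negPartPow k A θ 0)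
        (⟨p, hp⟩ : AlgHom.equalizer θ (AlgHom.id k A)) (Submodule.subset_span h1)
      have e : (⟨p, hp⟩ : AlgHom.equalizer θ (AlgHom.id k A)) • (1 : A) = p := mul_one p
      rwa [e] at this
    have hminus1 : ∀ q : A, θ q = -q → q ∈ negPartPow k A θ 1 := by
      intro q hq
      exact Submodule.subset_span ⟨fun _ => q, fun _ => hq, by simp⟩
    -- closure of M m := negPartPow m ⊔ negPartPow (m+1) under multiplication by A
    have hmulA : ∀ (m : ℕ) (a x : A),
        x ∈ negPartPow k A θ m ⊔ negPartPow k A θ (m + 1) →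
        a * x ∈ negPartPow k A θ m ⊔ negPartPow k A θ (m + 1) := by
      intro m a x hx
      obtain ⟨p, q, hp, hq, hpq⟩ := hdecomp a
      obtain ⟨x1, hx1, x2, hx2, rfl⟩ := Submodule.mem_sup.mp hx
      have hpx : p * (x1 + x2) ∈ negPartPow k A θ m ⊔ negPartPow k A θ (m + 1) := by
        have := Submodule.smul_mem (negPartPow k A θ m ⊔ negPartPow k A θ (m + 1))
          (⟨p, hp⟩ : AlgHom.equalizer θ (AlgHom.id k A)) hx
        have e : (⟨p, hp⟩ : AlgHom.equalizer θ (AlgHom.id k A)) • (x1 + x2) =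
            p * (x1 + x2) := rfl
        rwa [e] at this
      have hq1 : q * x1 ∈ negPartPow k A θ (m + 1) := mul_mem_negPartPow θ m hq hx1
      have hq2 : q * x2 ∈ negPartPow k A θ m :=
        negPartPow_succ_succ_le θ m (mul_mem_negPartPow θ (m + 1) hq hx2)
      have hqx : q * (x1 + x2) ∈ negPartPow k A θ m ⊔ negPartPow k A θ (m + 1) := by
        rw [mul_add]
        exact Submodule.add_mem _ (Submodule.mem_sup_right hq1) (Submodule.mem_sup_left hq2)
      have : a * (x1 + x2) = p * (x1 + x2) + q * (x1 + x2) := by rw [← hpq]; ring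
      rw [this]
      exact Submodule.add_mem _ hpx hqx
    -- I^m ≤ M m
    have hle : ∀ m : ℕ, ∀ x ∈ (I ^ m : Ideal A),
        x ∈ negPartPow k A θ m ⊔ negPartPow k A θ (m + 1) := by
      intro m
      induction m with
      | zero =>
        intro x _
        obtain ⟨p, q, hp, hq, hpq⟩ := hdecomp x
        rw [← hpq]
        exact Submodule.add_mem _ (Submodule.mem_sup_left (hplus0 p hp))
          (Submodule.mem_sup_right (hminus1 q hq))
      | succ m ih =>
        intro x hx
        rw [pow_succ] at hx
        refine Submodule.mul_induction_on hx ?_ ?_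
        · intro i hi j hj
          have hiM := ih i hi
          -- induct on j ∈ I = span {x | θ x = -x}
          induction hj using Submodule.span_induction with
          | mem j hj =>
            obtain ⟨i1, hi1, i2, hi2, rfl⟩ := Submodule.mem_sup.mp hiM
            have h1 : i1 * j ∈ negPartPow k A θ (m + 1) := by
              rw [mul_comm]; exact mul_mem_negPartPow θ m hj hi1
            have h2 : i2 * j ∈ negPartPow k A θ (m + 2) := by
              rw [mul_comm]; exact mul_mem_negPartPow θ (m + 1) hj hi2
            have : (i1 + i2) * j = i1 * j + i2 * j := by ring
            rw [this]
            exact Submodule.add_mem _ (Submodule.mem_sup_left h1)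
              (Submodule.mem_sup_right h2)
          | zero => simp
          | add x' y' hx' hy' ihx ihy =>
            have : i * (x' + y') = i * x' + i * y' := by ring
            rw [this]; exact Submodule.add_mem _ ihx ihy
          | smul a x' hx' ihx =>
            have : i * (a • x') = a * (i * x') := by
              show i * (a * x') = a * (i * x'); ring
            rw [this]
            exact hmulA (m + 1) a _ ihx
        · intro x y hx hy
          exact Submodule.add_mem _ hx hy
    -- M n ≤ I^n
    have hge1 : negPartPow k A θ n ≤
        Submodule.restrictScalars ↥(AlgHom.equalizer θ (AlgHom.id k A)) (I ^ n) := by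
      refine Submodule.span_le.mpr ?_
      rintro x ⟨g, hg, rfl⟩
      exact prod_mem_span_pow θ n g hg
    have hge2 : negPartPow k A θ (n + 1) ≤
        Submodule.restrictScalars ↥(AlgHom.equalizer θ (AlgHom.id k A)) (I ^ n) := by
      refine Submodule.span_le.mpr ?_
      rintro x ⟨g, hg, rfl⟩
      exact Ideal.pow_le_pow_right (Nat.le_succ n) (prod_mem_span_pow θ (n + 1) g hg)
    refine le_antisymm (sup_le hge1 hge2) ?_
    intro x hx
    exact Submodule.mem_sup.mp (hle n x hx) |> fun ⟨y, hy, z, hz, h⟩ =>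
      h ▸ Submodule.add_mem _ (Submodule.mem_sup_left hy) (Submodule.mem_sup_right hz)
end

section
/- Let I ⊆ A be the ideal generated by A^{-θ}, and let 𝐀₀ := 𝐀/(t) be the fiber of the contraction algebra at t = 0. Then there is a natural k-algebra isomorphism 𝐀₀ ≅ ⊕_{n≥0} I^n/I^{n+1}, the associated graded algebra of A with respect to I. -/
open LaurentPolynomial

/-!
Write `σₙ a = (a + (-1)ⁿ θ a) / 2` for the projection onto the `(-1)ⁿ`-eigenspace of `θ`, and
`T = √t`. Every element of `𝐀` has its `T^m`-coefficient in `I^(-m)` (read as `A` for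
`m ≥ 0`), and conversely `σₙ(Iⁿ) T⁻ⁿ ⊆ 𝐀`. Hence `Σ aₙ Xⁿ ↦ Σ σₙ(aₙ) T⁻ⁿ` maps the Rees
algebra of `I` into `𝐀`; it is multiplicative modulo `t = T²` because
`σᵢ₊ⱼ(ab) = σᵢa σⱼb + σᵢ₊₁a σⱼ₊₁b`. The induced map to `𝐀/(t)` hits the generators of `𝐀`,
and its kernel is `I · Rees(I)`: if `Σ σₙ(aₙ) T⁻ⁿ` is divisible by `T²` then
`σₙ(aₙ) ∈ Iⁿ⁺²`, while `σₙ₊₁(aₙ) ∈ Iⁿ⁺¹` always, so `aₙ ∈ Iⁿ⁺¹`.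
-/

open scoped Polynomial

section EigenProjection

variable {k A : Type*} [CommRing k] [Invertible (2 : k)] [CommRing A] [Algebra k A]
  (θ : A →ₐ[k] A)

def eigenProj (n : ℕ) : A →+ A where
  toFun a := (⅟2 : k) • (a + (-1) ^ n * θ a)
  map_zero' := by simp
  map_add' a b := by rw [map_add, ← smul_add]; congr 1; ring

theorem eigenProj_apply (n : ℕ) (a : A) :
    eigenProj θ n a = (⅟2 : k) • (a + (-1) ^ n * θ a) := rfl

theorem eigenProj_add_two (n : ℕ) (a : A) : eigenProj θ (n + 2) a = eigenProj θ n a := by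
  simp [eigenProj_apply, pow_add]

theorem eigenProj_add_eigenProj_succ (n : ℕ) (a : A) :
    eigenProj θ n a + eigenProj θ (n + 1) a = a := by
  rw [eigenProj_apply, eigenProj_apply, ← smul_add,
    show a + (-1) ^ n * θ a + (a + (-1) ^ (n + 1) * θ a) = a + a by ring,
    smul_add, invOf_two_smul_add_invOf_two_smul]

theorem eigenProj_eq_self {n : ℕ} {a : A} (h : θ a = (-1) ^ n * a) :
    eigenProj θ n a = a := by
  rw [eigenProj_apply, h, ← mul_assoc, ← mul_pow, neg_one_mul, neg_neg, one_pow, one_mul,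
    smul_add, invOf_two_smul_add_invOf_two_smul]

theorem map_eigenProj (hθ : Function.Involutive θ) (n : ℕ) (a : A) :
    θ (eigenProj θ n a) = (-1) ^ n * eigenProj θ n a := by
  rw [eigenProj_apply, map_smul, mul_smul_comm, map_add, map_mul, hθ a, map_pow, map_neg,
    map_one, mul_add, ← mul_assoc, ← mul_pow, neg_one_mul, neg_neg, one_pow, one_mul, add_comm]

theorem eigenProj_mul (i j : ℕ) (a b : A) :
    eigenProj θ (i + j) (a * b) =
      eigenProj θ i a * eigenProj θ j b + eigenProj θ (i + 1) a * eigenProj θ (j + 1) b := by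
  simp only [eigenProj_apply, map_mul, smul_mul_smul_comm]
  rw [← smul_add, show (a + (-1) ^ i * θ a) * (b + (-1) ^ j * θ b)
        + (a + (-1) ^ (i + 1) * θ a) * (b + (-1) ^ (j + 1) * θ b)
      = (2 : k) • (a * b + (-1) ^ (i + j) * (θ a * θ b)) by rw [two_smul]; ring,
    smul_smul, mul_assoc, invOf_mul_self, mul_one]

theorem eigenProj_succ_mul_of_anti {x : A} (hx : θ x = -x) (n : ℕ) (y : A) :
    eigenProj θ (n + 1) (y * x) = eigenProj θ n y * x := by
  rw [eigenProj_apply, eigenProj_apply, map_mul, hx, smul_mul_assoc]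
  congr 1
  ring

end EigenProjection

def extendedReesAlgebra {R : Type*} [CommRing R] (I : Ideal R) : Subalgebra R R[T;T⁻¹] where
  carrier := {f | ∀ m : ℤ, f.coeff m ∈ I ^ (-m).toNat}
  mul_mem' {f g} hf hg m := by
    classical
    rw [AddMonoidAlgebra.coeff_mul]
    refine Ideal.sum_mem _ fun i _ => Ideal.sum_mem _ fun j _ => ?_
    dsimp only
    split_ifs with h
    · refine Ideal.pow_le_pow_right (n := (-i).toNat + (-j).toNat) (by omega) ?_
      rw [pow_add]
      exact Ideal.mul_mem_mul (hf i) (hg j)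
    · exact zero_mem _
  add_mem' hf hg m := by
    rw [AddMonoidAlgebra.coeff_add, Finsupp.add_apply]
    exact add_mem (hf m) (hg m)
  algebraMap_mem' r m := by
    rw [LaurentPolynomial.algebraMap_apply, Algebra.algebraMap_self, RingHom.id_apply, C_apply]
    split_ifs with h
    · simp [h]
    · exact zero_mem _

theorem mem_extendedReesAlgebra {R : Type*} [CommRing R] {I : Ideal R} {f : R[T;T⁻¹]} :
    f ∈ extendedReesAlgebra I ↔ ∀ m : ℤ, f.coeff m ∈ I ^ (-m).toNat := Iff.rfl

theorem LaurentPolynomial.coeff_mul_T {R : Type*} [Semiring R] (f : R[T;T⁻¹]) (m n : ℤ) :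
    (f * T n).coeff m = f.coeff (m - n) := by
  simpa [sub_eq_add_neg] using AddMonoidAlgebra.coeff_mul_single_apply f (1 : R) n m

theorem mem_span_C_of_coeff_mem_pow_succ {R : Type*} [CommRing R] {I : Ideal R}
    (f : reesAlgebra I) (hf : ∀ n, (f : R[X]).coeff n ∈ I ^ (n + 1)) :
    f ∈ Ideal.span {x : reesAlgebra I | ∃ a ∈ I, (x : R[X]) = Polynomial.C a} := by
  set J := Ideal.span {x : reesAlgebra I | ∃ a ∈ I, (x : R[X]) = Polynomial.C a}
  let J' : AddSubmonoid R[X] := J.toAddSubmonoid.map (reesAlgebra I).val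
  suffices (f : R[X]) ∈ J' by
    obtain ⟨g, hg, hgf⟩ := this
    rwa [← Subtype.val_injective hgf]
  have monomial_mem (n : ℕ) {r : R} (hr : r ∈ I ^ (n + 1)) : Polynomial.monomial n r ∈ J' := by
    rw [pow_succ'] at hr
    refine Submodule.mul_induction_on (C := fun r => Polynomial.monomial n r ∈ J') hr
      (fun x hx y hy => ?_) fun x y hx hy => ?_
    · refine ⟨⟨Polynomial.C x, (reesAlgebra I).algebraMap_mem x⟩ *
        ⟨Polynomial.monomial n y, reesAlgebra.monomial_mem.mpr hy⟩,
        J.mul_mem_right _ (Ideal.subset_span ⟨x, hx, rfl⟩), ?_⟩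
      simp [Polynomial.C_mul_monomial]
    · rw [map_add]
      exact add_mem hx hy
  rw [(f : R[X]).as_sum_support]
  exact sum_mem fun n _ => monomial_mem n (hf n)

section Contraction

variable {k A : Type*} [CommRing k] [CommRing A] [Algebra k A] (θ : A →ₐ[k] A)

def antiInvariantIdeal : Ideal A := Ideal.span {x : A | θ x = -x}

theorem mem_antiInvariantIdeal_of_anti {x : A} (hx : θ x = -x) : x ∈ antiInvariantIdeal θ :=
  Ideal.subset_span hx

theorem contraction_le_extendedReesAlgebra :
    contraction k A θ ≤ (extendedReesAlgebra (antiInvariantIdeal θ)).restrictScalars k := by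
  refine Algebra.adjoin_le ?_
  rintro f (rfl | ⟨a, -, rfl⟩ | ⟨a, ha, rfl⟩) m
  · rw [T_apply]
    split_ifs with h
    · simp [← h]
    · exact zero_mem _
  · rw [C_apply]
    split_ifs with h
    · simp [h]
    · exact zero_mem _
  · rw [← single_eq_C_mul_T, AddMonoidAlgebra.coeff_single, Finsupp.single_apply]
    split_ifs with h
    · rw [← h]
      simpa using mem_antiInvariantIdeal_of_anti θ ha
    · exact zero_mem _

def MemContractionDeg (n : ℕ) (a : A) : Prop := C a * T (-(n : ℤ)) ∈ contraction k A θ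

variable {θ}

theorem MemContractionDeg.mem_pow {n : ℕ} {a : A} (h : MemContractionDeg θ n a) :
    a ∈ antiInvariantIdeal θ ^ n := by
  have := mem_extendedReesAlgebra.mp (contraction_le_extendedReesAlgebra θ h) (-n)
  simpa [← single_eq_C_mul_T] using this

theorem MemContractionDeg.add {n : ℕ} {a b : A} (ha : MemContractionDeg θ n a)
    (hb : MemContractionDeg θ n b) : MemContractionDeg θ n (a + b) := by
  unfold MemContractionDeg at *
  rw [map_add, add_mul]
  exact add_mem ha hb

theorem MemContractionDeg.mul {m n : ℕ} {a b : A} (ha : MemContractionDeg θ m a)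
    (hb : MemContractionDeg θ n b) : MemContractionDeg θ (m + n) (a * b) := by
  unfold MemContractionDeg at *
  rw [← single_eq_C_mul_T] at *
  convert mul_mem ha hb using 1
  rw [AddMonoidAlgebra.single_mul_single]
  push_cast
  ring_nf

theorem MemContractionDeg.of_add_two {n : ℕ} {a : A} (h : MemContractionDeg θ (n + 2) a) :
    MemContractionDeg θ n a := by
  unfold MemContractionDeg at *
  convert mul_mem (t_mem_contraction θ) h using 1
  rw [mul_left_comm, ← T_add]
  push_cast
  ring_nf

theorem memContractionDeg_zero (n : ℕ) : MemContractionDeg θ n 0 := by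
  simp [MemContractionDeg]

theorem memContractionDeg_zero_of_fixed {a : A} (h : θ a = a) : MemContractionDeg θ 0 a := by
  have : C a ∈ contraction k A θ :=
    Algebra.subset_adjoin (Set.mem_insert_of_mem _ (Or.inl ⟨a, h, rfl⟩))
  simpa [MemContractionDeg] using this

theorem memContractionDeg_one_of_anti {a : A} (h : θ a = -a) : MemContractionDeg θ 1 a := by
  have : C a * T (-1) ∈ contraction k A θ :=
    Algebra.subset_adjoin (Set.mem_insert_of_mem _ (Or.inr ⟨a, h, rfl⟩))
  simpa [MemContractionDeg] using this

variable [Invertible (2 : k)]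

theorem memContractionDeg_eigenProj_zero (hθ : Function.Involutive θ) (a : A) :
    MemContractionDeg θ 0 (eigenProj θ 0 a) :=
  memContractionDeg_zero_of_fixed (by simpa using map_eigenProj θ hθ 0 a)

theorem memContractionDeg_eigenProj_one (hθ : Function.Involutive θ) (a : A) :
    MemContractionDeg θ 1 (eigenProj θ 1 a) :=
  memContractionDeg_one_of_anti (by simpa using map_eigenProj θ hθ 1 a)

variable (θ) in
/-- Carrying the next degree along is what makes this closed under multiplication by
`A = A^θ ⊕ A^{-θ}`. -/
def contractionLiftIdeal (hθ : Function.Involutive θ) (n : ℕ) : Ideal A where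
  carrier := {a | MemContractionDeg θ n (eigenProj θ n a) ∧
    MemContractionDeg θ (n + 1) (eigenProj θ (n + 1) a)}
  add_mem' ha hb := by
    simp only [Set.mem_ofPred_eq, map_add]
    exact ⟨ha.1.add hb.1, ha.2.add hb.2⟩
  zero_mem' := by simp [memContractionDeg_zero]
  smul_mem' r a ha := by
    have h₀ := memContractionDeg_eigenProj_zero hθ r
    have h₁ := memContractionDeg_eigenProj_one hθ r
    simp only [Set.mem_ofPred_eq, smul_eq_mul, mul_comm r a]
    constructor
    · rw [← add_zero n, eigenProj_mul]
      exact (ha.1.mul h₀).add (ha.2.mul h₁).of_add_two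
    · rw [← add_zero (n + 1), eigenProj_mul, eigenProj_add_two]
      exact (ha.2.mul h₀).add (ha.1.mul h₁)

theorem pow_le_contractionLiftIdeal (hθ : Function.Involutive θ) (n : ℕ) :
    antiInvariantIdeal θ ^ n ≤ contractionLiftIdeal θ hθ n := by
  induction n with
  | zero =>
    intro a _
    exact ⟨memContractionDeg_eigenProj_zero hθ a, memContractionDeg_eigenProj_one hθ a⟩
  | succ n ih =>
    rw [pow_succ, Ideal.mul_le]
    intro y hy x hx
    suffices antiInvariantIdeal θ ≤ (contractionLiftIdeal θ hθ (n + 1)).colon (Ideal.span {y}) by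
      simpa [Submodule.mem_colon_span_singleton, mul_comm] using this hx
    refine Ideal.span_le.mpr fun x hx => Submodule.mem_colon_span_singleton.mpr ?_
    obtain ⟨hy₀, hy₁⟩ := ih hy
    rw [smul_eq_mul, mul_comm]
    refine ⟨?_, ?_⟩
    · rw [eigenProj_succ_mul_of_anti θ hx]
      exact hy₀.mul (memContractionDeg_one_of_anti hx)
    · rw [eigenProj_succ_mul_of_anti θ hx]
      exact hy₁.mul (memContractionDeg_one_of_anti hx)

variable (θ) in
noncomputable def eigenSymbol : A[X] →+ A[T;T⁻¹] where
  toFun f := f.sum fun n a => C (eigenProj θ n a) * T (-(n : ℤ))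
  map_zero' := Polynomial.sum_zero_index _
  map_add' f g := Polynomial.sum_add_index _ _ _ (by simp) (by simp [add_mul])

theorem eigenSymbol_monomial (n : ℕ) (a : A) :
    eigenSymbol θ (Polynomial.monomial n a) = C (eigenProj θ n a) * T (-(n : ℤ)) :=
  Polynomial.sum_monomial_index a (fun n a => C (eigenProj θ n a) * T (-(n : ℤ))) (by simp)

theorem eigenSymbol_C_of_fixed {a : A} (h : θ a = a) : eigenSymbol θ (Polynomial.C a) = C a := by
  rw [← Polynomial.monomial_zero_left, eigenSymbol_monomial, eigenProj_eq_self θ (by simpa)]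
  simp

theorem coeff_eigenSymbol (f : A[X]) (n : ℕ) :
    (eigenSymbol θ f).coeff (-(n : ℤ)) = eigenProj θ n (f.coeff n) := by
  induction f using Polynomial.induction_on' with
  | add f g hf hg => simp [hf, hg]
  | monomial m a =>
    rw [eigenSymbol_monomial, ← single_eq_C_mul_T, AddMonoidAlgebra.coeff_single,
      Finsupp.single_apply, Polynomial.coeff_monomial]
    by_cases h : m = n <;> simp [h]

theorem eigenSymbol_mem_of_forall {f : A[X]}
    (h : ∀ n, MemContractionDeg θ n (eigenProj θ n (f.coeff n))) :
    eigenSymbol θ f ∈ contraction k A θ :=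
  Subalgebra.sum_mem _ fun n _ => h n

theorem eigenSymbol_mem (hθ : Function.Involutive θ) {f : A[X]}
    (hf : f ∈ reesAlgebra (antiInvariantIdeal θ)) : eigenSymbol θ f ∈ contraction k A θ :=
  eigenSymbol_mem_of_forall fun n => (pow_le_contractionLiftIdeal hθ n (hf n)).1

theorem eigenSymbol_X_mul_mem (hθ : Function.Involutive θ) {f : A[X]}
    (hf : f ∈ reesAlgebra (antiInvariantIdeal θ)) :
    eigenSymbol θ (Polynomial.X * f) ∈ contraction k A θ := by
  refine eigenSymbol_mem_of_forall fun n => ?_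
  cases n with
  | zero => simpa using memContractionDeg_zero 0
  | succ n =>
    rw [Polynomial.coeff_X_mul]
    exact (pow_le_contractionLiftIdeal hθ n (hf n)).2

theorem eigenSymbol_mul (f g : A[X]) :
    eigenSymbol θ (f * g) = eigenSymbol θ f * eigenSymbol θ g
      + T 2 * (eigenSymbol θ (Polynomial.X * f) * eigenSymbol θ (Polynomial.X * g)) := by
  induction f using Polynomial.induction_on' with
  | add f₁ f₂ h₁ h₂ => simp only [add_mul, mul_add, map_add, h₁, h₂]; ring
  | monomial i a =>
    induction g using Polynomial.induction_on' with
    | add g₁ g₂ h₁ h₂ => simp only [mul_add, map_add, h₁, h₂]; ring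
    | monomial j b =>
      simp only [Polynomial.monomial_mul_monomial, Polynomial.X_mul_monomial,
        eigenSymbol_monomial, eigenProj_mul, map_add, map_mul]
      have hT : (T 2 : A[T;T⁻¹]) * T (-1) * T (-1) = 1 := by
        rw [← T_add, ← T_add]; norm_num
      simp only [Nat.cast_add, Nat.cast_one, neg_add, T_add]
      linear_combination (-(C (eigenProj θ (i + 1) a) * C (eigenProj θ (j + 1) b) *
        T (-(i : ℤ)) * T (-(j : ℤ)))) * hT

variable (θ) in
noncomputable def contractionLift (hθ : Function.Involutive θ) :
    reesAlgebra (antiInvariantIdeal θ) →+ contraction k A θ :=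
  ((eigenSymbol θ).comp (reesAlgebra (antiInvariantIdeal θ)).val.toRingHom.toAddMonoidHom)
    |>.codRestrict _ fun f => eigenSymbol_mem hθ f.2

theorem coe_contractionLift (hθ : Function.Involutive θ)
    (f : reesAlgebra (antiInvariantIdeal θ)) :
    (contractionLift θ hθ f : A[T;T⁻¹]) = eigenSymbol θ f := rfl

variable (θ) in
noncomputable def contractionSymbol (hθ : Function.Involutive θ) :
    reesAlgebra (antiInvariantIdeal θ) →ₐ[k]
      contraction k A θ ⧸ Ideal.span {(⟨T 2, t_mem_contraction θ⟩ : contraction k A θ)} where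
  toFun f := Ideal.Quotient.mk _ (contractionLift θ hθ f)
  map_one' := by
    rw [← map_one (Ideal.Quotient.mk _)]
    congr 1
    apply Subtype.ext
    simpa [coe_contractionLift] using eigenSymbol_C_of_fixed (map_one θ)
  map_mul' f g := by
    rw [← map_mul, Ideal.Quotient.eq, Ideal.mem_span_singleton']
    refine ⟨⟨_, eigenSymbol_X_mul_mem hθ f.2⟩ * ⟨_, eigenSymbol_X_mul_mem hθ g.2⟩, ?_⟩
    apply Subtype.ext
    push_cast [coe_contractionLift]
    rw [eigenSymbol_mul (f : A[X])]
    ring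
  map_zero' := by simp
  map_add' f g := by simp
  commutes' r := by
    rw [← Ideal.Quotient.mk_algebraMap]
    congr 1
    apply Subtype.ext
    simpa [coe_contractionLift, Polynomial.algebraMap_apply]
      using eigenSymbol_C_of_fixed (θ.commutes r)

theorem contractionSymbol_apply (hθ : Function.Involutive θ)
    (f : reesAlgebra (antiInvariantIdeal θ)) :
    contractionSymbol θ hθ f = Ideal.Quotient.mk _ (contractionLift θ hθ f) := rfl

theorem span_C_le_ker_contractionSymbol (hθ : Function.Involutive θ) :
    Ideal.span {x : reesAlgebra (antiInvariantIdeal θ) |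
        ∃ a ∈ antiInvariantIdeal θ, (x : A[X]) = Polynomial.C a}
      ≤ RingHom.ker (contractionSymbol θ hθ) := by
  refine Ideal.span_le.mpr ?_
  rintro x ⟨a, ha, hx⟩
  rw [SetLike.mem_coe, RingHom.mem_ker, contractionSymbol_apply, Ideal.Quotient.eq_zero_iff_mem,
    Ideal.mem_span_singleton']
  have h := (pow_le_contractionLiftIdeal hθ 1 (by simpa using ha)).2
  refine ⟨⟨_, h⟩, Subtype.ext ?_⟩
  simp only [Subalgebra.coe_mul, coe_contractionLift, hx, mul_T_assoc]
  rw [← Polynomial.monomial_zero_left, eigenSymbol_monomial, ← eigenProj_add_two θ 0 a]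
  simp

theorem ker_contractionSymbol_le (hθ : Function.Involutive θ) :
    RingHom.ker (contractionSymbol θ hθ) ≤ Ideal.span {x : reesAlgebra (antiInvariantIdeal θ) |
        ∃ a ∈ antiInvariantIdeal θ, (x : A[X]) = Polynomial.C a} := by
  intro f hf
  rw [RingHom.mem_ker, contractionSymbol_apply, Ideal.Quotient.eq_zero_iff_mem,
    Ideal.mem_span_singleton'] at hf
  obtain ⟨c, hc⟩ := hf
  refine mem_span_C_of_coeff_mem_pow_succ f fun n => ?_
  have h_even : eigenProj θ n ((f : A[X]).coeff n) ∈ antiInvariantIdeal θ ^ (n + 2) := by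
    rw [← coeff_eigenSymbol, ← coe_contractionLift hθ, ← hc, Subalgebra.coe_mul, coeff_mul_T]
    have := contraction_le_extendedReesAlgebra θ c.2 (-n - 2)
    rwa [show (-(-(n : ℤ) - 2)).toNat = n + 2 by omega] at this
  have h_odd := (pow_le_contractionLiftIdeal hθ n (f.2 n)).2.mem_pow
  rw [← eigenProj_add_eigenProj_succ θ n ((f : A[X]).coeff n)]
  exact add_mem (Ideal.pow_le_pow_right (by omega) h_even) h_odd

theorem contractionSymbol_surjective (hθ : Function.Involutive θ) :
    Function.Surjective (contractionSymbol θ hθ) := by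
  suffices ∀ g (hg : g ∈ contraction k A θ),
      Ideal.Quotient.mk _ ⟨g, hg⟩ ∈ (contractionSymbol θ hθ).range by
    intro q
    obtain ⟨⟨g, hg⟩, rfl⟩ := Ideal.Quotient.mk_surjective q
    exact this g hg
  intro g hg
  induction hg using Algebra.adjoin_induction with
  | mem g hg =>
    rcases hg with rfl | ⟨a, ha, rfl⟩ | ⟨a, ha, rfl⟩
    · refine ⟨0, ?_⟩
      rw [map_zero, eq_comm, Ideal.Quotient.eq_zero_iff_mem]
      exact Ideal.mem_span_singleton_self _
    · refine ⟨⟨Polynomial.C a, (reesAlgebra _).algebraMap_mem a⟩, ?_⟩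
      show Ideal.Quotient.mk _ _ = _
      congr 1
      apply Subtype.ext
      exact eigenSymbol_C_of_fixed ha
    · have ha' : a ∈ antiInvariantIdeal θ ^ 1 := by
        simpa using mem_antiInvariantIdeal_of_anti θ ha
      refine ⟨⟨Polynomial.monomial 1 a, reesAlgebra.monomial_mem.mpr ha'⟩, ?_⟩
      show Ideal.Quotient.mk _ _ = _
      congr 1
      apply Subtype.ext
      rw [coe_contractionLift, eigenSymbol_monomial, eigenProj_eq_self θ (by simpa using ha)]
      simp
  | algebraMap r => exact ⟨algebraMap k _ r, AlgHom.commutes _ r⟩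
  | add x y hx hy hx' hy' =>
    have := add_mem hx' hy'
    rwa [← map_add] at this
  | mul x y hx hy hx' hy' =>
    have := mul_mem hx' hy'
    rwa [← map_mul] at this

end Contraction

theorem contraction_fiber_zero_iso_assocGraded
    (k A : Type*) [CommRing k] [CommRing A] [Algebra k A] [Invertible (2 : k)]
    (θ : A →ₐ[k] A) (hθ : θ.comp θ = AlgHom.id k A) :
    Nonempty
      ((↥(contraction k A θ) ⧸
          Ideal.span {(⟨T 2, t_mem_contraction θ⟩ : ↥(contraction k A θ))})
        ≃ₐ[k]
       (↥(reesAlgebra (Ideal.span {x : A | θ x = -x})) ⧸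
          Ideal.span {x : ↥(reesAlgebra (Ideal.span {x : A | θ x = -x})) |
            ∃ a ∈ Ideal.span {x : A | θ x = -x},
              (x : Polynomial A) = Polynomial.C a})) := by
  have hθ' : Function.Involutive θ := fun a => DFunLike.congr_fun hθ a
  have hker := le_antisymm (span_C_le_ker_contractionSymbol hθ') (ker_contractionSymbol_le hθ')
  exact ⟨((Ideal.quotientEquivAlgOfEq k hker).trans
    (Ideal.quotientKerAlgEquivOfSurjective (contractionSymbol_surjective hθ'))).symm⟩
end
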